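/- Let z ∈ M and I an ideal of 𝔥_{M,∗}. Then I contains AP_z if and only if the modified Pythagorean identity −w_{z,1} ∗ S_z(x)^{∗2} + C_z(x)^{∗2} = 1 holds in (𝔥_{M,∗}/I)⟦x⟧, where ∗2 denotes the square with respect to the harmonic product. -/

import Mathlib

open scoped BigOperators

/-- `𝔥_M`: the noncommutative polynomial ring `ℚ⟨e_z : z ∈ M⟩`, realized as the
monoid algebra of the free monoid on `M` over `ℚ` (concatenation product). -/
abbrev H (M : Type*) [MonoidWithZero M] : Type _ := MonoidAlgebra ℚ (FreeMonoid M)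

variable {M : Type*} [MonoidWithZero M]

/-- The word `e_{a_1} ⋯ e_{a_k}` as an element of `𝔥_M`. -/
noncomputable def wrd (l : List M) : H M := MonoidAlgebra.single (FreeMonoid.ofList l) 1

/-- The generator `e_z`. -/
noncomputable def e (z : M) : H M := wrd [z]

/-- The harmonic product on words, defined by the recursion
`e_a w ∗ e_b w' = e_{ab}(w ∗ e_b w' + e_a w ∗ w' − e_0 (w ∗ w'))`. -/
noncomputable def har : List M → List M → H M
  | [], w => wrd w
  | a :: w, [] => wrd (a :: w)
  | a :: w, b :: w' =>
      wrd [a * b] * (har w (b :: w') + har (a :: w) w' - wrd [0] * har w w')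
termination_by w w' => w.length + w'.length
decreasing_by all_goals (simp; try omega)

/-- The harmonic product `∗` on `𝔥_M`, extended ℚ-bilinearly from words. -/
noncomputable def hmul (f g : H M) : H M :=
  Finsupp.sum f.coeff fun w a => Finsupp.sum g.coeff fun w' b =>
    (a * b) • har (FreeMonoid.toList w) (FreeMonoid.toList w')

/-- Powers with respect to the harmonic product. -/
noncomputable def hpow (a : H M) : ℕ → H M
  | 0 => 1
  | n + 1 => hmul a (hpow a n)

/-- `s_{z,k} = e_z e_0^{k-1}` (concatenation product). -/
noncomputable def s (z : M) (k : ℕ) : H M := e z * (e 0) ^ (k - 1)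

/-- `sprod z k n = s_{z^n,k} s_{z^{n-1},k} ⋯ s_{z,k}` (concatenation), `sprod z k 0 = 1`. -/
noncomputable def sprod (z : M) (k : ℕ) : ℕ → H M
  | 0 => 1
  | n + 1 => s (z ^ (n + 1)) k * sprod z k n

/-- Cauchy product of power series over `(𝔥_M, ∗)`, represented as coefficient sequences. -/
noncomputable def hmulPS (f g : ℕ → H M) : ℕ → H M :=
  fun n => ∑ i ∈ Finset.range (n + 1), hmul (f i) (g (n - i))

/-- Powers of a power series w.r.t. the harmonic product. -/
noncomputable def psPow (f : ℕ → H M) : ℕ → (ℕ → H M)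
  | 0 => fun n => if n = 0 then 1 else 0
  | m + 1 => hmulPS f (psPow f m)

/-- `exp_∗` of a power series with zero constant term (coefficientwise). -/
noncomputable def expPS (f : ℕ → H M) : ℕ → H M :=
  fun n => ∑ m ∈ Finset.range (n + 1), ((Nat.factorial m : ℚ))⁻¹ • psPow f m n

/-- Coefficients of the formal sine `S_z(x) = Σ_{n≥0} s_{z^n,2}⋯s_{z,2} x^{2n+1}`. -/
noncomputable def Scoef (z : M) (d : ℕ) : H M :=
  if d % 2 = 1 then sprod z 2 (d / 2) else 0

/-- Coefficients of the formal cosine `C_z(x) = S_z'(x)`. -/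
noncomputable def Ccoef (z : M) (d : ℕ) : H M := ((d : ℚ) + 1) • Scoef z (d + 1)

/-- `w_{z,n} = (2n+1)! s_{z^n,2} ⋯ s_{z,2}`. -/
noncomputable def wz (z : M) (n : ℕ) : H M := ((Nat.factorial (2 * n + 1) : ℚ)) • sprod z 2 n

/-- `g_{z,m,n} = w_{z,m+n} − w_{z,m} ∗ w_{z,n}`. -/
noncomputable def gz (z : M) (m n : ℕ) : H M := wz z (m + n) - hmul (wz z m) (wz z n)

/-- Coefficient of `x^i y^j` in `A_z(x,y) = S_z(x+y) − S_z(x) ∗ C_z(y) − C_z(x) ∗ S_z(y)`. -/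
noncomputable def Acoef (z : M) (i j : ℕ) : H M :=
  (Nat.choose (i + j) i : ℚ) • Scoef z (i + j)
    - hmul (Scoef z i) (Ccoef z j) - hmul (Ccoef z i) (Scoef z j)

/-- Coefficient of `x^d` in `P_z(x) = −w_{z,1} ∗ S_z(x)^{∗2} + C_z(x)^{∗2}`. -/
noncomputable def Pcoef (z : M) (d : ℕ) : H M :=
  -(hmul (wz z 1) (hmulPS (Scoef z) (Scoef z) d)) + hmulPS (Ccoef z) (Ccoef z) d


/-- Coefficients of `S^T_{z,k}(x) = Σ_{n≥0} s_{z^n,k}⋯s_{z,k} x^{(n+1)k−1}`. -/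
noncomputable def STcoef (z : M) (k : ℕ) (d : ℕ) : H M :=
  if k ∣ (d + 1) then sprod z k ((d + 1) / k - 1) else 0

/-- Coefficients of the series `Σ_{n≥1} (s_{z^n,nk}/n) x^{nk}`. -/
noncomputable def gexp (z : M) (k : ℕ) (d : ℕ) : H M :=
  if d ≠ 0 ∧ k ∣ d then (((d / k : ℕ) : ℚ))⁻¹ • s (z ^ (d / k)) d else 0

/-- Coefficients of `S^R_{z,k}(x) = x^{k−1} exp_∗(Σ_{n≥1} (s_{z^n,nk}/n) x^{nk})`. -/
noncomputable def SRcoef (z : M) (k : ℕ) (d : ℕ) : H M :=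
  if k - 1 ≤ d then expPS (gexp z k) (d - (k - 1)) else 0

/-- Admissible words spanning `𝔥^0_M = ℚ ⊕ ⨁_{a≠0,1} 𝔥_M e_a ⊕ ⨁_{a≠0,b≠1} e_a 𝔥_M e_b`. -/
def adm0 (l : List M) : Prop :=
  l = [] ∨ ∃ h : l ≠ [],
    (l.getLast h ≠ 0 ∧ l.getLast h ≠ 1) ∨ (l.head h ≠ 0 ∧ l.getLast h ≠ 1)

/-- The subspace `𝔥^0_M`. -/
noncomputable def H0 (M : Type*) [MonoidWithZero M] : Submodule ℚ (H M) :=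
  Submodule.span ℚ {x | ∃ l : List M, adm0 l ∧ x = wrd l}

/-- Words spanning `𝔥^1_M = ⨁_{m≥0} 𝔥^0_M e_1^m`. -/
def adm1 (l : List M) : Prop :=
  ∃ (l₀ : List M) (m : ℕ), adm0 l₀ ∧ l = l₀ ++ List.replicate m 1

/-- The subspace `𝔥^1_M`. -/
noncomputable def H1 (M : Type*) [MonoidWithZero M] : Submodule ℚ (H M) :=
  Submodule.span ℚ {x | ∃ l : List M, adm1 l ∧ x = wrd l}

/-- `ℓ(w)`: the number of letters `e_a` of a word with `a ≠ 0`. -/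
noncomputable def lcount (l : List M) : ℕ :=
  l.countP fun a => @decide (a ≠ 0) (Classical.propDecidable _)

/-- `ℱ_d 𝔥^0_M`: span of admissible words `w` with `ℓ(w) ≤ d`. -/
noncomputable def F0 (M : Type*) [MonoidWithZero M] (d : ℕ) : Submodule ℚ (H M) :=
  Submodule.span ℚ {x | ∃ l : List M, adm0 l ∧ lcount l ≤ d ∧ x = wrd l}

/-- The ideal of `(𝔥_M, ∗)` generated by a set. -/
noncomputable def genIdeal (S : Set (H M)) : Submodule ℚ (H M) :=
  Submodule.span ℚ {x | ∃ a y, y ∈ S ∧ x = hmul a y}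

/-- The product on the polynomial ring `𝔥_{M,∗}[S,T]` (represented as
finitely supported coefficient families indexed by monomials `S^i T^j`). -/
noncomputable def polyMul2 (f g : (ℕ × ℕ) →₀ H M) : (ℕ × ℕ) →₀ H M :=
  Finsupp.sum f fun p a => Finsupp.sum g fun q b => Finsupp.single (p + q) (hmul a b)

/-- `φ : 𝔥^0_{M,∗}[S,T] → 𝔥_{M,∗}`, `Σ w_{ij} S^i T^j ↦ Σ w_{ij} ∗ e_0^{∗i} ∗ e_1^{∗j}`. -/
noncomputable def phi2 (f : (ℕ × ℕ) →₀ H M) : H M :=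
  Finsupp.sum f fun p a => hmul a (hmul (hpow (e 0) p.1) (hpow (e 1) p.2))

/-- The product on `𝔥_{M,∗}[S]`. -/
noncomputable def polyMul1 (f g : ℕ →₀ H M) : ℕ →₀ H M :=
  Finsupp.sum f fun p a => Finsupp.sum g fun q b => Finsupp.single (p + q) (hmul a b)

/-- `φ₁ : 𝔥^1_{M,∗}[S] → 𝔥_{M,∗}`, `Σ w_i S^i ↦ Σ w_i ∗ e_0^{∗i}`. -/
noncomputable def phi1 (f : ℕ →₀ H M) : H M :=
  Finsupp.sum f fun i a => hmul a (hpow (e 0) i)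


/-!
Associativity of `∗`, together with its commutativity on words in the letters `0` and `z ^ n`,
gives `g_{z,a+1,b} = g_{z,1,a+b} + w_{z,1} ∗ g_{z,a,b} − w_{z,b} ∗ g_{z,1,a}`, so an ideal contains
`AP_z` as soon as it contains every `g_{z,1,n}`.

The coefficients of `S_z` and `C_z` are `w_{z,a} / (2a+1)!` and `w_{z,a} / (2a)!`, so the
coefficient of `x^{2n+2}` in `−w_{z,1} ∗ S_z(x)^{∗2} + C_z(x)^{∗2}` is a combination of products
`w_{z,a} ∗ w_{z,b} = w_{z,a+b} − g_{z,a,b}`. The `w_{z,n+1}` terms cancel because the even and the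
odd binomial coefficients of `2n+2` have the same sum. Modulo the `g_{z,1,l}` with `l < n`, every
`g_{z,a,b}` with `a + b = n + 1` and `a, b ≥ 1` is congruent to `g_{z,1,n}`, and what remains of
the coefficient is `2 / (2n+2)! • g_{z,1,n}`. Induction on `n` gives both directions; the odd
coefficients vanish by parity.
-/

open scoped Nat

lemma har_nil_left (l : List M) : har [] l = wrd l := by rw [har]

lemma har_nil_right (l : List M) : har l [] = wrd l := by
  cases l <;> rw [har]

lemma har_cons_cons (a b : M) (w w' : List M) :
    har (a :: w) (b :: w') =
      wrd [a * b] * (har w (b :: w') + har (a :: w) w' - wrd [0] * har w w') := by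
  rw [har]

lemma wrd_append (l l' : List M) : wrd (l ++ l') = wrd l * wrd l' := by
  unfold wrd
  rw [MonoidAlgebra.single_mul_single, one_mul, FreeMonoid.ofList_append]

lemma wrd_cons (a : M) (l : List M) : wrd (a :: l) = wrd [a] * wrd l :=
  wrd_append [a] l

lemma wrd_nil : wrd ([] : List M) = 1 := rfl

lemma of_eq_wrd (w : FreeMonoid M) : MonoidAlgebra.of ℚ (FreeMonoid M) w = wrd w.toList := by
  simp [wrd, MonoidAlgebra.of_apply]

section Bilinear

lemma add_hmul (f g h : H M) : hmul (f + g) h = hmul f h + hmul g h := by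
  classical
  unfold hmul
  rw [MonoidAlgebra.coeff_add, Finsupp.sum_add_index]
  · intro w _; simp
  · intro w _ a b; simp [add_mul, add_smul, Finsupp.sum_add]

lemma hmul_add (f g h : H M) : hmul f (g + h) = hmul f g + hmul f h := by
  classical
  unfold hmul
  rw [← Finsupp.sum_add]
  refine Finsupp.sum_congr fun w _ => ?_
  rw [MonoidAlgebra.coeff_add, Finsupp.sum_add_index]
  · intro w _; simp
  · intro w _ c d; simp [mul_add, add_smul]

lemma smul_hmul (c : ℚ) (f g : H M) : hmul (c • f) g = c • hmul f g := by
  unfold hmul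
  rw [MonoidAlgebra.coeff_smul, Finsupp.sum_smul_index (by simp), Finsupp.smul_sum]
  refine Finsupp.sum_congr fun w _ => ?_
  rw [Finsupp.smul_sum]
  refine Finsupp.sum_congr fun w' _ => ?_
  rw [smul_smul, mul_assoc]

lemma hmul_smul (c : ℚ) (f g : H M) : hmul f (c • g) = c • hmul f g := by
  unfold hmul
  rw [Finsupp.smul_sum]
  refine Finsupp.sum_congr fun w _ => ?_
  rw [MonoidAlgebra.coeff_smul, Finsupp.sum_smul_index (by simp), Finsupp.smul_sum]
  refine Finsupp.sum_congr fun w' _ => ?_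
  rw [smul_smul, mul_left_comm]

noncomputable def hmulₗ : H M →ₗ[ℚ] H M →ₗ[ℚ] H M :=
  LinearMap.mk₂ ℚ hmul add_hmul smul_hmul hmul_add hmul_smul

lemma hmul_zero (f : H M) : hmul f 0 = 0 := (hmulₗ f).map_zero

lemma zero_hmul (f : H M) : hmul 0 f = 0 := hmulₗ.map_zero₂ f

lemma hmul_sub (f g h : H M) : hmul f (g - h) = hmul f g - hmul f h := (hmulₗ f).map_sub g h

lemma sub_hmul (f g h : H M) : hmul (f - g) h = hmul f h - hmul g h := hmulₗ.map_sub₂ f g h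

lemma hmul_wrd_wrd (u v : List M) : hmul (wrd u) (wrd v) = har u v := by
  simp [hmul, wrd]

lemma one_hmul (f : H M) : hmul 1 f = f := by
  induction f using MonoidAlgebra.induction_on with
  | of w => rw [of_eq_wrd, ← wrd_nil, hmul_wrd_wrd, har_nil_left]
  | add f g hf hg => rw [hmul_add, hf, hg]
  | smul c f hf => rw [hmul_smul, hf]

lemma hmul_one (f : H M) : hmul f 1 = f := by
  induction f using MonoidAlgebra.induction_on with
  | of w => rw [of_eq_wrd, ← wrd_nil, hmul_wrd_wrd, har_nil_right]
  | add f g hf hg => rw [add_hmul, hf, hg]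
  | smul c f hf => rw [smul_hmul, hf]

end Bilinear

section Assoc

lemma hmul_wrd_cons_cons (a b : M) (p q : List M) :
    hmul (wrd (a :: p)) (wrd (b :: q)) =
      wrd [a * b] * (hmul (wrd p) (wrd (b :: q)) + hmul (wrd (a :: p)) (wrd q)
        - wrd [0] * hmul (wrd p) (wrd q)) := by
  simp only [hmul_wrd_wrd, har_cons_cons]

lemma hmul_wrd_mul_cons (a c : M) (t : List M) (X : H M) :
    hmul (wrd [a] * X) (wrd (c :: t)) =
      wrd [a * c] * (hmul X (wrd (c :: t)) + hmul (wrd [a] * X) (wrd t)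
        - wrd [0] * hmul X (wrd t)) := by
  induction X using MonoidAlgebra.induction_on with
  | of w => rw [of_eq_wrd, ← wrd_cons, hmul_wrd_cons_cons]
  | add f g hf hg =>
      simp only [mul_add, add_hmul, hf, hg]
      noncomm_ring
  | smul r f hf =>
      simp only [mul_smul_comm, smul_hmul, hf, ← smul_add, ← smul_sub]

lemma hmul_cons_wrd_mul (a c : M) (u : List M) (Y : H M) :
    hmul (wrd (a :: u)) (wrd [c] * Y) =
      wrd [a * c] * (hmul (wrd u) (wrd [c] * Y) + hmul (wrd (a :: u)) Y
        - wrd [0] * hmul (wrd u) Y) := by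
  induction Y using MonoidAlgebra.induction_on with
  | of w => rw [of_eq_wrd, ← wrd_cons, hmul_wrd_cons_cons]
  | add f g hf hg =>
      simp only [mul_add, hmul_add, hf, hg]
      noncomm_ring
  | smul r f hf =>
      simp only [mul_smul_comm, hmul_smul, hf, ← smul_add, ← smul_sub]

theorem hmul_wrd_assoc (u v t : List M) :
    hmul (hmul (wrd u) (wrd v)) (wrd t) = hmul (wrd u) (hmul (wrd v) (wrd t)) := by
  match u, v, t with
  | [], _, _ => rw [wrd_nil, one_hmul, one_hmul]
  | _ :: _, [], _ => rw [wrd_nil, hmul_one, one_hmul]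
  | _ :: _, _ :: _, [] => rw [wrd_nil, hmul_one, hmul_one]
  | a :: p, b :: q, c :: r =>
    rw [hmul_wrd_cons_cons a b, hmul_wrd_mul_cons, ← hmul_wrd_cons_cons a b,
      hmul_wrd_cons_cons b c, hmul_cons_wrd_mul, ← hmul_wrd_cons_cons b c]
    simp only [sub_hmul, add_hmul, hmul_sub, hmul_add]
    -- `0` is absorbing in `M`, which matches the `e_0`-correction terms of the two sides.
    rw [hmul_wrd_mul_cons 0 c r, hmul_cons_wrd_mul a 0 p, zero_mul, mul_zero, mul_assoc a b c,
      hmul_wrd_assoc p (b :: q) (c :: r), hmul_wrd_assoc (a :: p) q (c :: r),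
      hmul_wrd_assoc (a :: p) (b :: q) r, hmul_wrd_assoc p q (c :: r),
      hmul_wrd_assoc p (b :: q) r, hmul_wrd_assoc (a :: p) q r, hmul_wrd_assoc p q r]
    noncomm_ring
termination_by u.length + v.length + t.length

theorem hmul_assoc (f g h : H M) : hmul (hmul f g) h = hmul f (hmul g h) := by
  induction f using MonoidAlgebra.induction_on with
  | add f f' hf hf' => rw [add_hmul, add_hmul, add_hmul, hf, hf']
  | smul c f hf => rw [smul_hmul, smul_hmul, smul_hmul, hf]
  | of u =>
  induction g using MonoidAlgebra.induction_on with
  | add g g' hg hg' => rw [hmul_add, add_hmul, hg, hg', add_hmul, hmul_add]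
  | smul c g hg => rw [hmul_smul, smul_hmul, hg, smul_hmul, hmul_smul]
  | of v =>
  induction h using MonoidAlgebra.induction_on with
  | add h h' hh hh' => rw [hmul_add, hh, hh', hmul_add, hmul_add]
  | smul c h hh => rw [hmul_smul, hh, hmul_smul, hmul_smul]
  | of t => rw [of_eq_wrd, of_eq_wrd, of_eq_wrd, hmul_wrd_assoc]

end Assoc

section WordSpan

noncomputable def wordSpan (T : Set M) : Submodule ℚ (H M) :=
  Submodule.span ℚ (wrd '' {l | ∀ a ∈ l, a ∈ T})

variable {T : Set M}

lemma wrd_mem_wordSpan {l : List M} (hl : ∀ a ∈ l, a ∈ T) : wrd l ∈ wordSpan T :=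
  Submodule.subset_span ⟨l, hl, rfl⟩

lemma mul_mem_wordSpan {x y : H M} (hx : x ∈ wordSpan T) (hy : y ∈ wordSpan T) :
    x * y ∈ wordSpan T := by
  induction hx using Submodule.span_induction with
  | zero => rw [zero_mul]; exact zero_mem _
  | add x x' _ _ hx hx' => rw [add_mul]; exact add_mem hx hx'
  | smul c x _ hx => rw [smul_mul_assoc]; exact Submodule.smul_mem _ c hx
  | mem x hx =>
  induction hy using Submodule.span_induction with
  | zero => rw [mul_zero]; exact zero_mem _
  | add y y' _ _ hy hy' => rw [mul_add]; exact add_mem hy hy'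
  | smul c y _ hy => rw [mul_smul_comm]; exact Submodule.smul_mem _ c hy
  | mem y hy =>
    obtain ⟨u, hu, rfl⟩ := hx
    obtain ⟨v, hv, rfl⟩ := hy
    rw [← wrd_append]
    exact wrd_mem_wordSpan fun a ha => (List.mem_append.1 ha).elim (hu a) (hv a)

lemma har_comm {u v : List M} (h : ∀ a ∈ u, ∀ b ∈ v, Commute a b) : har u v = har v u := by
  match u, v with
  | [], _ => rw [har_nil_left, har_nil_right]
  | _ :: _, [] => rw [har_nil_left, har_nil_right]
  | a :: p, b :: q =>
    rw [har_cons_cons, har_cons_cons, (h a (by simp) b (by simp)).eq,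
      har_comm (u := p) (v := b :: q) fun x hx y hy => h x (by simp [hx]) y hy,
      har_comm (u := a :: p) (v := q) fun x hx y hy => h x hx y (by simp [hy]),
      har_comm (u := p) (v := q) fun x hx y hy => h x (by simp [hx]) y (by simp [hy]),
      add_comm (har q _)]
termination_by u.length + v.length

lemma har_mem_wordSpan (h0 : (0 : M) ∈ T) (hT : ∀ a ∈ T, ∀ b ∈ T, a * b ∈ T) {u v : List M}
    (hu : ∀ a ∈ u, a ∈ T) (hv : ∀ a ∈ v, a ∈ T) : har u v ∈ wordSpan T := by
  match u, v with
  | [], _ => rw [har_nil_left]; exact wrd_mem_wordSpan hv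
  | _ :: _, [] => rw [har_nil_right]; exact wrd_mem_wordSpan hu
  | a :: p, b :: q =>
    have hp : ∀ x ∈ p, x ∈ T := fun x hx => hu x (by simp [hx])
    have hq : ∀ x ∈ q, x ∈ T := fun x hx => hv x (by simp [hx])
    have hletter : ∀ x ∈ T, wrd [x] ∈ wordSpan T := fun x hx =>
      wrd_mem_wordSpan (by simpa using hx)
    rw [har_cons_cons]
    refine mul_mem_wordSpan (hletter _ (hT a (hu a (by simp)) b (hv b (by simp))))
      (sub_mem (add_mem (har_mem_wordSpan h0 hT hp hv) (har_mem_wordSpan h0 hT hu hq))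
        (mul_mem_wordSpan (hletter 0 h0) (har_mem_wordSpan h0 hT hp hq)))
termination_by u.length + v.length

lemma hmul_mem_wordSpan (h0 : (0 : M) ∈ T) (hT : ∀ a ∈ T, ∀ b ∈ T, a * b ∈ T) {x y : H M}
    (hx : x ∈ wordSpan T) (hy : y ∈ wordSpan T) : hmul x y ∈ wordSpan T := by
  induction hx using Submodule.span_induction with
  | zero => rw [zero_hmul]; exact zero_mem _
  | add x x' _ _ hx hx' => rw [add_hmul]; exact add_mem hx hx'
  | smul c x _ hx => rw [smul_hmul]; exact Submodule.smul_mem _ c hx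
  | mem x hx =>
  induction hy using Submodule.span_induction with
  | zero => rw [hmul_zero]; exact zero_mem _
  | add y y' _ _ hy hy' => rw [hmul_add]; exact add_mem hy hy'
  | smul c y _ hy => rw [hmul_smul]; exact Submodule.smul_mem _ c hy
  | mem y hy =>
    obtain ⟨u, hu, rfl⟩ := hx
    obtain ⟨v, hv, rfl⟩ := hy
    rw [hmul_wrd_wrd]
    exact har_mem_wordSpan h0 hT hu hv

lemma hmul_comm_of_mem_wordSpan (hT : ∀ a ∈ T, ∀ b ∈ T, Commute a b) {x y : H M}
    (hx : x ∈ wordSpan T) (hy : y ∈ wordSpan T) : hmul x y = hmul y x := by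
  induction hx using Submodule.span_induction with
  | zero => rw [zero_hmul, hmul_zero]
  | add x x' _ _ hx hx' => rw [add_hmul, hmul_add, hx, hx']
  | smul c x _ hx => rw [smul_hmul, hmul_smul, hx]
  | mem x hx =>
  induction hy using Submodule.span_induction with
  | zero => rw [zero_hmul, hmul_zero]
  | add y y' _ _ hy hy' => rw [add_hmul, hmul_add, hy, hy']
  | smul c y _ hy => rw [smul_hmul, hmul_smul, hy]
  | mem y hy =>
    obtain ⟨u, hu, rfl⟩ := hx
    obtain ⟨v, hv, rfl⟩ := hy
    rw [hmul_wrd_wrd, hmul_wrd_wrd, har_comm fun a ha b hb => hT a (hu a ha) b (hv b hb)]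

end WordSpan

section Defects

variable (z : M)

def powLetters : Set M := insert 0 (Set.range (z ^ ·))

lemma zero_mem_powLetters : (0 : M) ∈ powLetters z := Set.mem_insert 0 _

lemma pow_mem_powLetters (n : ℕ) : z ^ n ∈ powLetters z := Set.mem_insert_of_mem 0 ⟨n, rfl⟩

lemma mul_mem_powLetters : ∀ a ∈ powLetters z, ∀ b ∈ powLetters z, a * b ∈ powLetters z := by
  rintro a (rfl | ⟨m, rfl⟩) b (rfl | ⟨n, rfl⟩)
  · rw [zero_mul]; exact zero_mem_powLetters z
  · rw [zero_mul]; exact zero_mem_powLetters z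
  · rw [mul_zero]; exact zero_mem_powLetters z
  · rw [← pow_add]; exact pow_mem_powLetters z _

lemma commute_of_mem_powLetters : ∀ a ∈ powLetters z, ∀ b ∈ powLetters z, Commute a b := by
  rintro a (rfl | ⟨m, rfl⟩) b (rfl | ⟨n, rfl⟩)
  · exact Commute.zero_left 0
  · exact Commute.zero_left _
  · exact Commute.zero_right _
  · exact Commute.pow_pow_self z m n

lemma wz_mem_wordSpan (n : ℕ) : wz z n ∈ wordSpan (powLetters z) := by
  refine Submodule.smul_mem _ _ ?_
  induction n with
  | zero => exact wrd_mem_wordSpan (l := []) (by simp)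
  | succ n ih =>
    have hs : s (z ^ (n + 1)) 2 = wrd [z ^ (n + 1), 0] := by
      rw [s, e, e, pow_one, ← wrd_append]; rfl
    rw [sprod, hs]
    refine mul_mem_wordSpan (wrd_mem_wordSpan ?_) ih
    simp [pow_mem_powLetters, zero_mem_powLetters]

lemma wz_zero : wz z 0 = 1 := by simp [wz, sprod]

lemma gz_zero_left (n : ℕ) : gz z 0 n = 0 := by
  rw [gz, wz_zero, one_hmul, zero_add, sub_self]

lemma gz_zero_right (m : ℕ) : gz z m 0 = 0 := by
  rw [gz, wz_zero, hmul_one, add_zero, sub_self]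

lemma hmul_wz_wz (m n : ℕ) : hmul (wz z m) (wz z n) = wz z (m + n) - gz z m n := by
  rw [gz, sub_sub_cancel]

/-- The factor `w_{z,b}` is put on the left so that a left ideal absorbs the last term. -/
lemma gz_succ_left (a b : ℕ) :
    gz z (a + 1) b = gz z 1 (a + b) + hmul (wz z 1) (gz z a b) - hmul (wz z b) (gz z 1 a) := by
  have hw : wz z (a + 1) = hmul (wz z 1) (wz z a) + gz z 1 a := by
    rw [gz, add_comm 1 a, add_sub_cancel]
  have hcomm : hmul (gz z 1 a) (wz z b) = hmul (wz z b) (gz z 1 a) :=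
    hmul_comm_of_mem_wordSpan (commute_of_mem_powLetters z)
      (sub_mem (wz_mem_wordSpan z _) (hmul_mem_wordSpan (zero_mem_powLetters z)
        (mul_mem_powLetters z) (wz_mem_wordSpan z 1) (wz_mem_wordSpan z a)))
      (wz_mem_wordSpan z b)
  rw [gz, hw, add_hmul, hmul_assoc, hmul_wz_wz, hmul_sub, hmul_wz_wz, hcomm,
    show 1 + (a + b) = a + 1 + b by omega]
  abel

end Defects

section Ideal

variable {z : M} {I : Submodule ℚ (H M)} {n : ℕ}

theorem gz_mem_of_gz_one_mem (hI : ∀ a b : H M, b ∈ I → hmul a b ∈ I)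
    (h1 : ∀ l < n, gz z 1 l ∈ I) : ∀ a b, a + b ≤ n → gz z a b ∈ I := by
  intro a
  induction a with
  | zero => intro b _; rw [gz_zero_left]; exact zero_mem I
  | succ a ih =>
    intro b hab
    rw [gz_succ_left]
    exact sub_mem (add_mem (h1 _ (by omega)) (hI _ _ (ih b (by omega)))) (hI _ _ (h1 a (by omega)))

theorem gz_sub_gz_one_mem (hI : ∀ a b : H M, b ∈ I → hmul a b ∈ I)
    (h1 : ∀ l < n, gz z 1 l ∈ I) {a b : ℕ} (hb : b ≠ 0) (hab : a + b = n) :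
    gz z (a + 1) b - gz z 1 n ∈ I := by
  rw [gz_succ_left, hab, add_sub_assoc, add_sub_cancel_left]
  exact sub_mem (hI _ _ (gz_mem_of_gz_one_mem hI h1 a b hab.le)) (hI _ _ (h1 a (by omega)))

lemma mkQ_hmul_eq_of_mkQ_eq (hI : ∀ a b : H M, b ∈ I → hmul a b ∈ I) {x y : H M}
    (h : I.mkQ x = I.mkQ y) (a : H M) : I.mkQ (hmul a x) = I.mkQ (hmul a y) :=
  (Submodule.Quotient.eq I).2 (by rw [← hmul_sub]; exact hI a _ ((Submodule.Quotient.eq I).1 h))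

end Ideal

lemma Finset.sum_range_two_mul_add_one {β : Type*} [AddCommMonoid β] (f : ℕ → β) (k : ℕ) :
    ∑ i ∈ Finset.range (2 * k + 1), f i
      = ∑ a ∈ Finset.range (k + 1), f (2 * a) + ∑ a ∈ Finset.range k, f (2 * a + 1) := by
  induction k with
  | zero => simp
  | succ k ih =>
    rw [show 2 * (k + 1) + 1 = 2 * k + 1 + 1 + 1 by ring, Finset.sum_range_succ,
      Finset.sum_range_succ, ih, Finset.sum_range_succ (fun a => f (2 * a)) (k + 1),
      Finset.sum_range_succ (fun a => f (2 * a + 1)) k, show 2 * (k + 1) = 2 * k + 1 + 1 by ring]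
    abel

section Coefficients

variable (z : M)

lemma Scoef_two_mul (a : ℕ) : Scoef z (2 * a) = 0 := by
  rw [Scoef, if_neg (by omega)]

lemma Scoef_two_mul_add_one (a : ℕ) :
    Scoef z (2 * a + 1) = ((2 * a + 1)! : ℚ)⁻¹ • wz z a := by
  rw [Scoef, if_pos (by omega), wz, smul_smul, inv_mul_cancel₀ (by positivity), one_smul,
    show (2 * a + 1) / 2 = a by omega]

lemma Ccoef_two_mul (a : ℕ) : Ccoef z (2 * a) = ((2 * a)! : ℚ)⁻¹ • wz z a := by
  rw [Ccoef, Scoef_two_mul_add_one, smul_smul, Nat.factorial_succ]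
  congr 1
  push_cast
  field_simp

lemma Ccoef_two_mul_add_one (a : ℕ) : Ccoef z (2 * a + 1) = 0 := by
  rw [Ccoef, show 2 * a + 1 + 1 = 2 * (a + 1) by ring, Scoef_two_mul, smul_zero]

lemma hmulPS_Scoef_Scoef_two_mul_add_one (k : ℕ) :
    hmulPS (Scoef z) (Scoef z) (2 * k + 1) = 0 := by
  refine Finset.sum_eq_zero fun i hi => ?_
  obtain ⟨a, rfl | rfl⟩ := Nat.even_or_odd' i
  · rw [Scoef_two_mul, zero_hmul]
  · rw [show 2 * k + 1 - (2 * a + 1) = 2 * (k - a) by omega, Scoef_two_mul, hmul_zero]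

lemma hmulPS_Ccoef_Ccoef_two_mul_add_one (k : ℕ) :
    hmulPS (Ccoef z) (Ccoef z) (2 * k + 1) = 0 := by
  refine Finset.sum_eq_zero fun i hi => ?_
  have hi : i ≤ 2 * k + 1 := Finset.mem_range_succ_iff.1 hi
  obtain ⟨a, rfl | rfl⟩ := Nat.even_or_odd' i
  · rw [show 2 * k + 1 - 2 * a = 2 * (k - a) + 1 by omega, Ccoef_two_mul_add_one, hmul_zero]
  · rw [Ccoef_two_mul_add_one, zero_hmul]

lemma Pcoef_two_mul_add_one (k : ℕ) : Pcoef z (2 * k + 1) = 0 := by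
  rw [Pcoef, hmulPS_Scoef_Scoef_two_mul_add_one, hmulPS_Ccoef_Ccoef_two_mul_add_one, hmul_zero,
    neg_zero, add_zero]

lemma hmulPS_Scoef_Scoef_two_mul_succ (k : ℕ) :
    hmulPS (Scoef z) (Scoef z) (2 * (k + 1)) = ∑ a ∈ Finset.range (k + 1),
      ((2 * a + 1)! * (2 * (k - a) + 1)! : ℚ)⁻¹ • hmul (wz z a) (wz z (k - a)) := by
  rw [hmulPS, Finset.sum_range_two_mul_add_one,
    Finset.sum_eq_zero fun a _ => by rw [Scoef_two_mul, zero_hmul], zero_add]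
  refine Finset.sum_congr rfl fun a ha => ?_
  have ha : a ≤ k := Finset.mem_range_succ_iff.1 ha
  rw [show 2 * (k + 1) - (2 * a + 1) = 2 * (k - a) + 1 by omega, Scoef_two_mul_add_one,
    Scoef_two_mul_add_one, smul_hmul, hmul_smul, smul_smul, mul_inv]

lemma hmulPS_Ccoef_Ccoef_two_mul (k : ℕ) :
    hmulPS (Ccoef z) (Ccoef z) (2 * k) = ∑ a ∈ Finset.range (k + 1),
      ((2 * a)! * (2 * (k - a))! : ℚ)⁻¹ • hmul (wz z a) (wz z (k - a)) := by
  have hodd : ∑ a ∈ Finset.range k, hmul (Ccoef z (2 * a + 1)) (Ccoef z (2 * k - (2 * a + 1)))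
      = 0 := Finset.sum_eq_zero fun a _ => by rw [Ccoef_two_mul_add_one, zero_hmul]
  rw [hmulPS, Finset.sum_range_two_mul_add_one, hodd, add_zero]
  refine Finset.sum_congr rfl fun a _ => ?_
  rw [← mul_tsub, Ccoef_two_mul, Ccoef_two_mul, smul_hmul, hmul_smul, smul_smul, mul_inv]

lemma Pcoef_zero : Pcoef z 0 = 1 := by
  have hS : Scoef z 0 = 0 := Scoef_two_mul z 0
  have hC : Ccoef z 0 = 1 := by simpa [wz_zero] using Ccoef_two_mul z 0
  simp [Pcoef, hmulPS, hS, hC, hmul_zero, one_hmul]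

end Coefficients

lemma sum_range_neg_one_pow_mul_inv_factorial_mul {m : ℕ} (hm : m ≠ 0) :
    ∑ j ∈ Finset.range (m + 1), (-1 : ℚ) ^ j * (j ! * (m - j)! : ℚ)⁻¹ = 0 := by
  have hterm : ∀ j ∈ Finset.range (m + 1),
      (-1 : ℚ) ^ j * (j ! * (m - j)! : ℚ)⁻¹ = (m ! : ℚ)⁻¹ * ((-1) ^ j * (m.choose j : ℚ)) := by
    intro j hj
    rw [Nat.cast_choose ℚ (Finset.mem_range_succ_iff.1 hj)]
    field_simp
  have halt : ∑ j ∈ Finset.range (m + 1), (-1 : ℚ) ^ j * (m.choose j : ℚ) = 0 := by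
    exact_mod_cast Int.alternating_sum_range_choose_of_ne hm
  rw [Finset.sum_congr rfl hterm, ← Finset.mul_sum, halt, mul_zero]

lemma sum_range_inv_factorial_even_eq_odd (k : ℕ) :
    ∑ a ∈ Finset.range (k + 2), ((2 * a)! * (2 * (k + 1 - a))! : ℚ)⁻¹
      = ∑ a ∈ Finset.range (k + 1), ((2 * a + 1)! * (2 * (k - a) + 1)! : ℚ)⁻¹ := by
  have h := sum_range_neg_one_pow_mul_inv_factorial_mul (m := 2 * (k + 1)) (by omega)
  rw [Finset.sum_range_two_mul_add_one] at h
  have heven : ∑ a ∈ Finset.range (k + 2),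
      (-1 : ℚ) ^ (2 * a) * ((2 * a)! * (2 * (k + 1) - 2 * a)! : ℚ)⁻¹
        = ∑ a ∈ Finset.range (k + 2), ((2 * a)! * (2 * (k + 1 - a))! : ℚ)⁻¹ :=
    Finset.sum_congr rfl fun a _ => by rw [pow_mul, neg_one_sq, one_pow, one_mul, ← mul_tsub]
  have hodd : ∑ a ∈ Finset.range (k + 1),
      (-1 : ℚ) ^ (2 * a + 1) * ((2 * a + 1)! * (2 * (k + 1) - (2 * a + 1))! : ℚ)⁻¹
        = -∑ a ∈ Finset.range (k + 1), ((2 * a + 1)! * (2 * (k - a) + 1)! : ℚ)⁻¹ := by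
    rw [← Finset.sum_neg_distrib]
    refine Finset.sum_congr rfl fun a ha => ?_
    have ha : a ≤ k := Finset.mem_range_succ_iff.1 ha
    rw [pow_succ, pow_mul, neg_one_sq, one_pow, one_mul, neg_one_mul,
      show 2 * (k + 1) - (2 * a + 1) = 2 * (k - a) + 1 by omega]
  rwa [heven, hodd, ← sub_eq_add_neg, sub_eq_zero] at h

section Pythagorean

variable {z : M} {I : Submodule ℚ (H M)} {n : ℕ}

lemma mkQ_hmulPS_Scoef_Scoef (hI : ∀ a b : H M, b ∈ I → hmul a b ∈ I)
    (h1 : ∀ l < n, gz z 1 l ∈ I) :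
    I.mkQ (hmulPS (Scoef z) (Scoef z) (2 * (n + 1)))
      = (∑ a ∈ Finset.range (n + 1), ((2 * a + 1)! * (2 * (n - a) + 1)! : ℚ)⁻¹)
        • I.mkQ (wz z n) := by
  rw [hmulPS_Scoef_Scoef_two_mul_succ, map_sum, Finset.sum_smul]
  refine Finset.sum_congr rfl fun a ha => ?_
  have ha : a ≤ n := Finset.mem_range_succ_iff.1 ha
  have hg : I.mkQ (gz z a (n - a)) = 0 :=
    (Submodule.Quotient.mk_eq_zero I).2 (gz_mem_of_gz_one_mem hI h1 a (n - a) (by omega))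
  rw [map_smul, hmul_wz_wz, Nat.add_sub_cancel' ha, map_sub, hg, sub_zero]

lemma mkQ_hmulPS_Ccoef_Ccoef (hI : ∀ a b : H M, b ∈ I → hmul a b ∈ I)
    (h1 : ∀ l < n, gz z 1 l ∈ I) :
    I.mkQ (hmulPS (Ccoef z) (Ccoef z) (2 * (n + 1)))
      = (∑ a ∈ Finset.range (n + 2), ((2 * a)! * (2 * (n + 1 - a))! : ℚ)⁻¹) • I.mkQ (wz z (n + 1))
        - (∑ a ∈ Finset.range n, ((2 * (a + 1))! * (2 * (n - a))! : ℚ)⁻¹)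
          • I.mkQ (gz z 1 n) := by
  have hterm : ∀ a ∈ Finset.range (n + 2),
      ((2 * a)! * (2 * (n + 1 - a))! : ℚ)⁻¹ • hmul (wz z a) (wz z (n + 1 - a))
        = ((2 * a)! * (2 * (n + 1 - a))! : ℚ)⁻¹ • wz z (n + 1)
          - ((2 * a)! * (2 * (n + 1 - a))! : ℚ)⁻¹ • gz z a (n + 1 - a) := fun a ha => by
    rw [hmul_wz_wz, Nat.add_sub_cancel' (Finset.mem_range_succ_iff.1 ha), smul_sub]
  rw [hmulPS_Ccoef_Ccoef_two_mul, Finset.sum_congr rfl hterm, Finset.sum_sub_distrib,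
    ← Finset.sum_smul, map_sub, map_smul, map_sum]
  congr 1
  rw [Finset.sum_range_succ, Finset.sum_range_succ', Nat.sub_self, gz_zero_right, gz_zero_left,
    smul_zero, smul_zero, map_zero, add_zero, add_zero, Finset.sum_smul]
  refine Finset.sum_congr rfl fun a ha => ?_
  have ha : a < n := Finset.mem_range.1 ha
  have hg : I.mkQ (gz z (a + 1) (n - a)) = I.mkQ (gz z 1 n) :=
    (Submodule.Quotient.eq I).2 (gz_sub_gz_one_mem hI h1 (by omega) (by omega))
  rw [map_smul, show n + 1 - (a + 1) = n - a by omega, hg]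

theorem Pcoef_sub_smul_gz_one_mem (hI : ∀ a b : H M, b ∈ I → hmul a b ∈ I)
    (h1 : ∀ l < n, gz z 1 l ∈ I) :
    Pcoef z (2 * (n + 1)) - (2 / ((2 * (n + 1))! : ℚ)) • gz z 1 n ∈ I := by
  set R := ∑ a ∈ Finset.range (n + 1), ((2 * a + 1)! * (2 * (n - a) + 1)! : ℚ)⁻¹
  have hSS : I.mkQ (hmul (wz z 1) (hmulPS (Scoef z) (Scoef z) (2 * (n + 1))))
      = R • (I.mkQ (wz z (n + 1)) - I.mkQ (gz z 1 n)) := by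
    have hS : I.mkQ (hmulPS (Scoef z) (Scoef z) (2 * (n + 1))) = I.mkQ (R • wz z n) := by
      rw [mkQ_hmulPS_Scoef_Scoef hI h1, map_smul]
    rw [mkQ_hmul_eq_of_mkQ_eq hI hS, hmul_smul, hmul_wz_wz, add_comm 1 n, map_smul, map_sub]
  have hQ : ∑ a ∈ Finset.range (n + 2), ((2 * a)! * (2 * (n + 1 - a))! : ℚ)⁻¹
      = ∑ a ∈ Finset.range n, ((2 * (a + 1))! * (2 * (n - a))! : ℚ)⁻¹
        + 2 / ((2 * (n + 1))! : ℚ) := by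
    rw [Finset.sum_range_succ, Finset.sum_range_succ']
    simp only [Nat.sub_self, Nat.sub_zero, mul_zero, Nat.factorial_zero, Nat.cast_one, mul_one,
      one_mul, show ∀ a, n + 1 - (a + 1) = n - a from fun a => by omega]
    ring
  have hR : R = ∑ a ∈ Finset.range n, ((2 * (a + 1))! * (2 * (n - a))! : ℚ)⁻¹
      + 2 / ((2 * (n + 1))! : ℚ) := by
    rw [← hQ, sum_range_inv_factorial_even_eq_odd]
  refine (Submodule.Quotient.eq I).1 ?_
  rw [← Submodule.mkQ_apply, ← Submodule.mkQ_apply, Pcoef, map_add, map_neg, hSS,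
    mkQ_hmulPS_Ccoef_Ccoef hI h1, hQ, hR, map_smul]
  module

end Pythagorean

/-- Theorem 4.1: an ideal `I` of `𝔥_{M,∗}` is `AP_z`-ample iff the modified Pythagorean
identity `−w_{z,1} ∗ S_z(x)^{∗2} + C_z(x)^{∗2} = 1` holds in `(𝔥_{M,∗}/I)⟦x⟧`. -/
theorem pythagorean_iff_ample (M : Type*) [MonoidWithZero M] (z : M)
    (I : Submodule ℚ (H M)) (hI : ∀ a b : H M, b ∈ I → hmul a b ∈ I) :
    genIdeal {x : H M | ∃ m n : ℕ, x = gz z m n} ≤ I ↔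
      ∀ d : ℕ, Pcoef z d - (if d = 0 then (1 : H M) else 0) ∈ I := by
  constructor
  · intro hAP d
    have hg : ∀ m n, gz z m n ∈ I := fun m n =>
      hAP (Submodule.subset_span ⟨1, _, ⟨m, n, rfl⟩, (one_hmul _).symm⟩)
    obtain ⟨k, rfl | rfl⟩ := Nat.even_or_odd' d
    · cases k with
      | zero => simp [Pcoef_zero]
      | succ n =>
        rw [if_neg (by omega), sub_zero, ← sub_add_cancel (Pcoef z _) ((2 / _ : ℚ) • gz z 1 n)]
        exact add_mem (Pcoef_sub_smul_gz_one_mem hI fun l _ => hg 1 l) (I.smul_mem _ (hg 1 n))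
    · rw [Pcoef_two_mul_add_one, if_neg (by omega), sub_zero]
      exact zero_mem I
  · intro hP
    have h1 : ∀ n, gz z 1 n ∈ I := by
      intro n
      induction n using Nat.strong_induction_on with
      | _ n ih =>
        have hPn := hP (2 * (n + 1))
        rw [if_neg (by omega), sub_zero] at hPn
        have hsmul := sub_mem hPn (Pcoef_sub_smul_gz_one_mem hI ih)
        rw [sub_sub_cancel] at hsmul
        exact (I.smul_mem_iff (by positivity)).1 hsmul
    refine Submodule.span_le.2 ?_
    rintro x ⟨a, y, ⟨m, n, rfl⟩, rfl⟩
    exact hI a _ (gz_mem_of_gz_one_mem hI (fun l _ => h1 l) m n le_rfl)
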